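/- arXiv:0911.3773 — 4 statements merged into one kernel-verified Lean document; each statement's English description precedes it below -/
import Mathlib

section
/- (Multiplication formula) For every positive integer m and real θ, Cl₂(mθ) = m · Σ_{ℓ=0}^{m-1} Cl₂(θ + 2πℓ/m). -/
open Real

noncomputable def Cl2 (θ : ℝ) : ℝ := ∑' m : ℕ, Real.sin ((m + 1) * θ) / (m + 1) ^ 2

/-!
Write `Cl₂(θ) = ∑ₙ sin(nθ)/n²`. Summing `sin(n(θ + 2πℓ/m))` over `ℓ < m` is the imaginary part of
`e^{inθ}` times a geometric sum of the `m`-th root of unity `ζ^n`, which is `m` if `m ∣ n` and `0`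
otherwise. So `m ∑ₗ Cl₂(θ + 2πℓ/m)` keeps only the terms `n = mj`, each equal to
`m² sin(mjθ)/(mj)² = sin(j·mθ)/j²`.
-/

open Finset

theorem IsPrimitiveRoot.geom_sum_pow_eq {R : Type*} [CommRing R] [IsDomain R] {ζ : R} {m : ℕ}
    (hζ : IsPrimitiveRoot ζ m) (n : ℕ) :
    ∑ ℓ ∈ range m, (ζ ^ n) ^ ℓ = if m ∣ n then (m : R) else 0 := by
  split_ifs with hdvd
  · simp [(hζ.pow_eq_one_iff_dvd n).2 hdvd]
  · have hne : ζ ^ n - 1 ≠ 0 := sub_ne_zero.2 (mt (hζ.pow_eq_one_iff_dvd n).1 hdvd)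
    refine mul_left_cancel₀ hne ?_
    rw [mul_geom_sum, ← pow_mul, mul_comm, pow_mul, hζ.pow_eq_one]
    simp

theorem sum_sin_mul_add_two_pi_div {m : ℕ} (hm : m ≠ 0) (n : ℕ) (θ : ℝ) :
    ∑ ℓ ∈ range m, sin (n * (θ + 2 * π * ℓ / m)) = if m ∣ n then m * sin (n * θ) else 0 := by
  set ζ := Complex.exp (2 * π * Complex.I / m)
  have hterm (ℓ : ℕ) :
      sin (n * (θ + 2 * π * ℓ / m)) = (Complex.exp (↑(n * θ) * Complex.I) * (ζ ^ n) ^ ℓ).im := by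
    rw [← pow_mul, ← Complex.exp_nat_mul, ← Complex.exp_add]
    convert (Complex.exp_ofReal_mul_I_im _).symm using 3
    push_cast
    field_simp
  rw [sum_congr rfl fun ℓ _ => hterm ℓ, ← Complex.im_sum, ← mul_sum,
    (Complex.isPrimitiveRoot_exp m hm).geom_sum_pow_eq n]
  split_ifs
  · rw [← Complex.ofReal_natCast, Complex.im_mul_ofReal, Complex.exp_ofReal_mul_I_im, mul_comm]
  · simp

theorem tsum_ite_dvd_eq_tsum_mul {α : Type*} [AddCommMonoid α] [TopologicalSpace α] {m : ℕ}
    (hm : m ≠ 0) (g : ℕ → α) : ∑' n, (if m ∣ n then g n else 0) = ∑' j, g (m * j) := by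
  rw [← (mul_right_injective₀ hm).tsum_eq]
  · simp
  · intro n hn
    obtain ⟨k, rfl⟩ : m ∣ n := by
      by_contra h
      simp [h] at hn
    exact ⟨k, rfl⟩

theorem summable_sin_mul_div_sq (θ : ℝ) : Summable fun n : ℕ => sin (n * θ) / n ^ 2 := by
  refine Summable.of_norm_bounded (summable_one_div_nat_pow.2 one_lt_two) fun n => ?_
  rw [norm_div, norm_pow, Real.norm_natCast]
  gcongr
  exact abs_sin_le_one _

theorem Cl2_eq_tsum (θ : ℝ) : Cl2 θ = ∑' n : ℕ, sin (n * θ) / n ^ 2 := by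
  rw [Cl2, ← (add_left_injective 1).tsum_eq (f := fun n : ℕ => sin (n * θ) / (n : ℝ) ^ 2)]
  · push_cast
    rfl
  · intro n hn
    have hn0 : n ≠ 0 := by
      rintro rfl
      simp at hn
    exact ⟨n - 1, Nat.sub_add_cancel (Nat.one_le_iff_ne_zero.2 hn0)⟩

theorem stmt5 (m : ℕ) (hm : 0 < m) (θ : ℝ) :
    Cl2 (m * θ) = m * ∑ ℓ ∈ Finset.range m, Cl2 (θ + 2 * π * ℓ / m) := by
  have hm0 : m ≠ 0 := hm.ne'
  have hcoeff (n : ℕ) : m * ∑ ℓ ∈ range m, sin (n * (θ + 2 * π * ℓ / m)) / n ^ 2 =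
      if m ∣ n then m ^ 2 * sin (n * θ) / n ^ 2 else 0 := by
    rw [← sum_div, sum_sin_mul_add_two_pi_div hm0]
    split_ifs <;> ring
  simp_rw [Cl2_eq_tsum]
  rw [← Summable.tsum_finsetSum fun ℓ _ => summable_sin_mul_div_sq _, ← tsum_mul_left]
  simp_rw [hcoeff]
  rw [tsum_ite_dvd_eq_tsum_mul hm0]
  congr 1 with j
  push_cast
  rw [mul_pow, ← mul_assoc, mul_comm (j : ℝ), mul_div_mul_left _ _ (by positivity)]
end

section
/- (Duplication formula) For all real θ, (1/2)·Cl₂(2θ) = Cl₂(θ) - Cl₂(π - θ). -/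
open Real

/-!
Since `sin (n (π - θ)) = -(-1)^n sin (n θ)`, the series `Cl₂(θ) - Cl₂(π - θ)` has the terms with odd
frequency `n` cancelled and those with even frequency `n = 2k` doubled, and
`2 sin (2k θ) / (2k)² = (1/2) sin (k · 2θ) / k²`. Note that `Cl2Term θ m` carries frequency `m + 1`,
so odd frequencies are the even indices `m`.
-/

noncomputable def Cl2Term (θ : ℝ) (m : ℕ) : ℝ := sin ((m + 1) * θ) / (m + 1) ^ 2

theorem Cl2_eq_tsum_s6 (θ : ℝ) : Cl2 θ = ∑' m, Cl2Term θ m := rfl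

theorem summable_Cl2Term (θ : ℝ) : Summable (Cl2Term θ) := by
  have hsq : Summable fun m : ℕ => 1 / ((m : ℝ) + 1) ^ 2 := by
    simpa using (summable_nat_add_iff 1).mpr (summable_one_div_nat_pow.mpr one_lt_two)
  refine hsq.of_norm_bounded fun m => ?_
  rw [Cl2Term, norm_div, norm_pow, Real.norm_of_nonneg (by positivity : (0 : ℝ) ≤ m + 1)]
  gcongr
  exact abs_sin_le_one _

theorem Cl2Term_pi_sub (θ : ℝ) (m : ℕ) :
    Cl2Term (π - θ) m = -((-1) ^ (m + 1) * Cl2Term θ m) := by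
  have h : ((m : ℝ) + 1) * (π - θ) = ((m + 1 : ℕ) : ℝ) * π - (m + 1) * θ := by push_cast; ring
  rw [Cl2Term, Cl2Term, h, sin_nat_mul_pi_sub]
  ring

theorem Cl2Term_pi_sub_even (θ : ℝ) (k : ℕ) : Cl2Term (π - θ) (2 * k) = Cl2Term θ (2 * k) := by
  rw [Cl2Term_pi_sub, (even_two_mul k).add_one.neg_one_pow]
  ring

theorem Cl2Term_sub_Cl2Term_pi_sub_odd (θ : ℝ) (k : ℕ) :
    Cl2Term θ (2 * k + 1) - Cl2Term (π - θ) (2 * k + 1) = Cl2Term (2 * θ) k / 2 := by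
  rw [Cl2Term_pi_sub, (even_two_mul k).add_one.add_one.neg_one_pow, Cl2Term, Cl2Term]
  push_cast
  have hk : (k : ℝ) + 1 ≠ 0 := by positivity
  field_simp
  ring_nf

theorem stmt6 (θ : ℝ) : (1 / 2) * Cl2 (2 * θ) = Cl2 θ - Cl2 (π - θ) := by
  have hodd : Function.Injective fun k : ℕ => 2 * k + 1 := fun a b h => by simpa using h
  have hsupp : (Function.support fun m => Cl2Term θ m - Cl2Term (π - θ) m) ⊆
      Set.range fun k : ℕ => 2 * k + 1 := by
    intro m hm
    obtain ⟨k, rfl | rfl⟩ := Nat.even_or_odd' m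
    · simp [Cl2Term_pi_sub_even] at hm
    · exact ⟨k, rfl⟩
  rw [Cl2_eq_tsum_s6, Cl2_eq_tsum_s6, Cl2_eq_tsum_s6,
    ← (summable_Cl2Term θ).tsum_sub (summable_Cl2Term (π - θ)), ← hodd.tsum_eq hsupp]
  simp only [Cl2Term_sub_Cl2Term_pi_sub_odd, tsum_div_const]
  ring
end

section
/- For real θ and φ with 0 < φ < π/2 and θ, θ+φ in suitable ranges, an antiderivative of θ ↦ ln(tan θ + tan φ) is θ ↦ -θ·ln(cos φ) - (1/2)Cl₂(2θ + 2φ) - (1/2)Cl₂(π - 2θ), i.e. the derivative of the latter expression in θ equals ln(tan θ + tan φ) wherever tan θ + tan φ > 0. -/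
/-!
For `|r| < 1` the Abel means `abelCl2 r y = ∑ rⁿ⁺¹ sin((n+1)y)/(n+1)²` of the Clausen series
have `y`-derivative `Re(-log(1 - r e^{iy})) = -log|1 - r e^{iy}|`. Away from `y ∈ 2πℤ` these
derivatives converge locally uniformly as `r → 1⁻` to `-log|1 - e^{iy}| = -log|2 sin(y/2)|`,
which is therefore the derivative of `Cl2`. The theorem follows by the chain rule and
`tan θ + tan φ = sin(θ + φ) / (cos θ cos φ)`.
-/

open Real

open Filter Topology

theorem tendstoUniformlyOnFilter_of_continuousAt {α β γ : Type*} [TopologicalSpace α]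
    [TopologicalSpace β] [PseudoMetricSpace γ] {F : α → β → γ} {a : α} {b : β}
    (hF : ContinuousAt (Function.uncurry F) (a, b)) :
    TendstoUniformlyOnFilter F (F a) (𝓝 a) (𝓝 b) := by
  rw [Metric.tendstoUniformlyOnFilter_iff]
  intro ε hε
  have hnear : ∀ᶠ p in 𝓝 a ×ˢ 𝓝 b, dist (F p.1 p.2) (F a b) < ε / 2 := by
    rw [← nhds_prod_eq]
    exact Metric.tendsto_nhds.1 hF _ (half_pos hε)
  have hfiber : ∀ᶠ y in 𝓝 b, dist (F a y) (F a b) < ε / 2 :=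
    Metric.tendsto_nhds.1 (hF.comp (continuous_const.prodMk continuous_id).continuousAt) _
      (half_pos hε)
  filter_upwards [hnear, hfiber.prod_inr (𝓝 a)] with p h₁ h₂
  calc dist (F a p.2) (F p.1 p.2) ≤ dist (F a p.2) (F a b) + dist (F p.1 p.2) (F a b) :=
        dist_triangle_right _ _ _
    _ < ε := by linarith

theorem norm_pow_mul_div_le (r : ℝ) {c d : ℝ} (hc : |c| ≤ 1) (hd : 1 ≤ d) (n : ℕ) :
    ‖r ^ n * c / d‖ ≤ |r| ^ n := by
  rw [Real.norm_eq_abs, abs_div, abs_mul, abs_pow, abs_of_pos (by linarith : 0 < d)]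
  calc |r| ^ n * |c| / d ≤ |r| ^ n * 1 / 1 := by gcongr
    _ = |r| ^ n := by ring

theorem hasSum_pow_mul_cos_div {r : ℝ} (hr : |r| < 1) (y : ℝ) :
    HasSum (fun n : ℕ => r ^ (n + 1) * cos ((n + 1) * y) / (n + 1))
      (-log ‖1 - r * Complex.exp (y * Complex.I)‖) := by
  set z : ℂ := r * Complex.exp (y * Complex.I)
  have hz : ‖z‖ < 1 := by simpa [z, Complex.norm_exp_ofReal_mul_I] using hr
  have hre (n : ℕ) : (z ^ n / n).re = r ^ n * cos (n * y) / n := by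
    rw [Complex.div_natCast_re, mul_pow, ← Complex.exp_nat_mul, ← Complex.ofReal_pow,
      Complex.re_ofReal_mul, ← mul_assoc, ← Complex.ofReal_natCast, ← Complex.ofReal_mul,
      Complex.exp_ofReal_mul_I_re]
  have h := Complex.hasSum_re (Complex.hasSum_taylorSeries_neg_log hz)
  simp only [hre, Complex.neg_re, Complex.log_re] at h
  simpa using (hasSum_nat_add_iff' 1).2 h

noncomputable def abelCl2 (r y : ℝ) : ℝ :=
  ∑' n : ℕ, r ^ (n + 1) * sin ((n + 1) * y) / (n + 1) ^ 2

theorem abelCl2_one : abelCl2 1 = Cl2 := by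
  ext y
  simp [abelCl2, Cl2]

theorem tendsto_abelCl2 (y : ℝ) : Tendsto (abelCl2 · y) (𝓝[<] 1) (𝓝 (Cl2 y)) := by
  have hsummable : Summable (fun n : ℕ => 1 / ((n : ℝ) + 1) ^ 2) := by
    exact_mod_cast (summable_nat_add_iff 1).2 (Real.summable_one_div_nat_pow.2 one_lt_two)
  have hcont : ContinuousOn (abelCl2 · y) (Set.Icc (-1) 1) := by
    refine continuousOn_tsum (fun n => by fun_prop) hsummable fun n r hr => ?_
    rw [Real.norm_eq_abs, abs_div, abs_mul, abs_pow,
      abs_of_pos (by positivity : (0 : ℝ) < (n + 1) ^ 2)]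
    gcongr
    exact mul_le_one₀ (pow_le_one₀ (abs_nonneg _) (abs_le.2 hr)) (abs_nonneg _) (abs_sin_le_one _)
  rw [← abelCl2_one]
  exact (hcont 1 ⟨by norm_num, le_rfl⟩).mono_of_mem_nhdsWithin (Icc_mem_nhdsLT (by norm_num))

theorem hasDerivAt_abelCl2 {r : ℝ} (hr : |r| < 1) (y : ℝ) :
    HasDerivAt (abelCl2 r) (-log ‖1 - r * Complex.exp (y * Complex.I)‖) y := by
  rw [← (hasSum_pow_mul_cos_div hr y).tsum_eq]
  have hgeom : Summable (fun n : ℕ => |r| ^ (n + 1)) :=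
    (summable_nat_add_iff 1).2 (summable_geometric_of_lt_one (abs_nonneg r) hr)
  have hn (n : ℕ) : (1 : ℝ) ≤ n + 1 := by linarith [n.cast_nonneg (α := ℝ)]
  refine hasDerivAt_tsum (y₀ := y) hgeom (fun n t => ?_)
    (fun n t => norm_pow_mul_div_le r (abs_cos_le_one _) (hn n) _)
    (hgeom.of_norm_bounded fun n =>
      norm_pow_mul_div_le r (abs_sin_le_one _) (one_le_pow₀ (hn n)) _) y
  refine ((((hasDerivAt_id t).const_mul ((n : ℝ) + 1)).sin.const_mul (r ^ (n + 1))).div_const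
    (((n : ℝ) + 1) ^ 2)).congr_deriv ?_
  field_simp
  simp

/-- Since `Real.log` is `log |·|`, this also covers the points where `sin (x / 2) < 0`. -/
theorem hasDerivAt_Cl2 {x : ℝ} (hx : sin (x / 2) ≠ 0) :
    HasDerivAt Cl2 (-log (2 * sin (x / 2))) x := by
  set F : ℝ → ℝ → ℝ := fun r y => -log ‖1 - r * Complex.exp (y * Complex.I)‖
  have hnorm : ‖1 - Complex.exp (x * Complex.I)‖ = |2 * sin (x / 2)| := by
    rw [norm_sub_rev, mul_comm, Complex.norm_exp_I_mul_ofReal_sub_one, Real.norm_eq_abs]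
  have hF : ContinuousAt (Function.uncurry F) (1, x) := by
    refine (ContinuousAt.log (by fun_prop) ?_).neg
    simpa [hnorm] using hx
  have hF₁ : F 1 x = -log (2 * sin (x / 2)) := by
    simp only [F, Complex.ofReal_one, one_mul, hnorm, Real.log_abs]
  rw [← hF₁]
  refine hasDerivAt_of_tendstoUniformlyOnFilter
    ((tendstoUniformlyOnFilter_of_continuousAt hF).mono_left nhdsWithin_le_nhds) ?_
    (Eventually.of_forall tendsto_abelCl2)
  filter_upwards [Eventually.prod_inl (Ioo_mem_nhdsLT (show (-1 : ℝ) < 1 by norm_num)) (𝓝 x)]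
    with p hp using hasDerivAt_abelCl2 (abs_lt.2 hp) p.2

theorem log_tan_add_tan {θ φ : ℝ} (hθ : cos θ ≠ 0) (hφ : cos φ ≠ 0) (h : sin (θ + φ) ≠ 0) :
    log (tan θ + tan φ) = log (2 * sin (θ + φ)) - log (2 * cos θ) - log (cos φ) := by
  have htan : tan θ + tan φ = sin (θ + φ) / (cos θ * cos φ) := by
    rw [tan_eq_sin_div_cos, tan_eq_sin_div_cos, sin_add]
    field_simp
  rw [htan, log_div h (mul_ne_zero hθ hφ), log_mul two_ne_zero h, log_mul two_ne_zero hθ,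
    log_mul hθ hφ]
  ring

theorem stmt9_general (φ θ : ℝ) (hφ : 0 < φ) (hφ' : φ < π / 2)
    (hθ : 0 < θ) (hθ' : θ < π / 2) :
    HasDerivAt (fun x : ℝ => -x * Real.log (Real.cos φ)
        - (1 / 2) * Cl2 (2 * x + 2 * φ) - (1 / 2) * Cl2 (π - 2 * x))
      (Real.log (Real.tan θ + Real.tan φ)) θ := by
  have hcosθ : cos θ ≠ 0 := (cos_pos_of_mem_Ioo ⟨by linarith, hθ'⟩).ne'
  have hcosφ : cos φ ≠ 0 := (cos_pos_of_mem_Ioo ⟨by linarith, hφ'⟩).ne'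
  have hsin : sin (θ + φ) ≠ 0 := (sin_pos_of_pos_of_lt_pi (by linarith) (by linarith)).ne'
  have hhalf₁ : (2 * θ + 2 * φ) / 2 = θ + φ := by ring
  have hhalf₂ : sin ((π - 2 * θ) / 2) = cos θ := by
    rw [← sin_pi_div_two_sub]; ring_nf
  have h₁ := (hasDerivAt_Cl2 (x := 2 * θ + 2 * φ) (by rwa [hhalf₁])).comp θ
    (((hasDerivAt_id θ).const_mul 2).add_const (2 * φ))
  have h₂ := (hasDerivAt_Cl2 (x := π - 2 * θ) (by rwa [hhalf₂])).comp θ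
    (((hasDerivAt_id θ).const_mul 2).const_sub π)
  refine ((((hasDerivAt_id θ).neg.mul_const (log (cos φ))).sub (h₁.const_mul (1 / 2))).sub
    (h₂.const_mul (1 / 2))).congr_deriv ?_
  rw [log_tan_add_tan hcosθ hcosφ hsin, hhalf₁, hhalf₂]
  ring

theorem stmt9 (φ θ : ℝ) (hφ : 0 < φ) (hφ' : φ < π / 2)
    (hθ : 0 < θ) (hθ' : θ < π / 2)
    (hpos : Real.tan θ + Real.tan φ > 0) :
    HasDerivAt (fun x : ℝ => -x * Real.log (Real.cos φ)
        - (1 / 2) * Cl2 (2 * x + 2 * φ) - (1 / 2) * Cl2 (π - 2 * x))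
      (Real.log (Real.tan θ + Real.tan φ)) θ :=
  stmt9_general φ θ hφ hφ' hθ hθ'
end

section
/- For 0 < x < φ < π/2, ∫_x^φ ln((tan φ + tan θ)/(tan φ - tan θ)) dθ = (1/2)Cl₂(2x + 2φ) - (1/2)Cl₂(2x - 2φ) - (1/2)Cl₂(4φ). -/
/-!
For `0 ≤ r < 1` the series `∑ r^(m+1) cos((m+1)t)/(m+1) = -log |1 - r e^{it}|` can be integrated
termwise, giving the Clausen series damped by `r^(m+1)`. Letting `r → 1⁻` (dominated convergence on
both sides; on the integral side `|log |sin(t/2)|| + log 2` dominates, as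
`|sin(t/2)| ≤ |1 - r e^{it}| ≤ 2`) gives `∫_a^b -log (2 sin(t/2)) dt = Cl₂ b - Cl₂ a` for all real
`a, b`. The integrand of the theorem is `log (2 sin(φ + θ)) - log (2 sin(φ - θ))`, and the
substitutions `t = 2φ ∓ 2θ` finish the computation.
-/

open Real

open Filter Topology MeasureTheory

lemma summable_one_div_succ_sq : Summable fun m : ℕ => 1 / ((m : ℝ) + 1) ^ 2 := by
  simpa using (summable_nat_add_iff 1).mpr (Real.summable_one_div_nat_pow.mpr one_lt_two)

lemma summable_norm_sin_mul_div_succ_sq (θ : ℝ) :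
    Summable fun m : ℕ => ‖sin ((m + 1) * θ) / ((m : ℝ) + 1) ^ 2‖ := by
  refine summable_one_div_succ_sq.of_nonneg_of_le (fun _ => norm_nonneg _) fun m => ?_
  rw [norm_div, Real.norm_eq_abs, Real.norm_of_nonneg (by positivity)]
  gcongr
  exact abs_sin_le_one _

lemma hasSum_Cl2 (θ : ℝ) :
    HasSum (fun m : ℕ => sin ((m + 1) * θ) / ((m : ℝ) + 1) ^ 2) (Cl2 θ) :=
  (summable_norm_sin_mul_div_succ_sq θ).of_norm.hasSum

lemma Cl2_neg (θ : ℝ) : Cl2 (-θ) = -Cl2 θ := by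
  simp only [Cl2, mul_neg, sin_neg, neg_div, tsum_neg]

lemma Cl2_zero : Cl2 0 = 0 := by
  simp [Cl2]

lemma hasSum_pow_succ_mul_cos_div {r : ℝ} (hr : |r| < 1) (t : ℝ) :
    HasSum (fun m : ℕ => r ^ (m + 1) * cos ((m + 1) * t) / (m + 1))
      (-log ‖1 - r * Complex.exp (t * Complex.I)‖) := by
  have hz : ‖(r : ℂ) * Complex.exp (t * Complex.I)‖ < 1 := by
    rwa [norm_mul, Complex.norm_exp_ofReal_mul_I, mul_one, Complex.norm_real, Real.norm_eq_abs]
  convert Complex.hasSum_re (Complex.hasSum_taylorSeries_neg_log' hz) using 1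
  · funext m
    rw [mul_pow, ← Complex.exp_nat_mul, ← mul_assoc]
    have : ((r : ℂ) ^ (m + 1) * Complex.exp (((m + 1 : ℕ) : ℂ) * t * Complex.I)) / (m + 1) =
        ((r ^ (m + 1) / (m + 1) : ℝ) : ℂ) * Complex.exp (((m + 1) * t : ℝ) * Complex.I) := by
      push_cast
      ring
    rw [this, Complex.re_ofReal_mul, Complex.exp_ofReal_mul_I_re]
    ring
  · simp [Complex.log_re]

lemma integral_pow_succ_mul_cos_div (r a b : ℝ) (m : ℕ) :
    ∫ t in a..b, r ^ (m + 1) * cos ((m + 1) * t) / (m + 1) =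
      r ^ (m + 1) * (sin ((m + 1) * b) - sin ((m + 1) * a)) / ((m : ℝ) + 1) ^ 2 := by
  have hm : (m : ℝ) + 1 ≠ 0 := by positivity
  simp only [intervalIntegral.integral_div, intervalIntegral.integral_const_mul,
    intervalIntegral.integral_comp_mul_left (fun s => cos s) hm, integral_cos, smul_eq_mul]
  field_simp

lemma hasSum_integral_neg_log_norm_one_sub_mul_exp {r : ℝ} (hr : |r| < 1) (a b : ℝ) :
    HasSum (fun m : ℕ => r ^ (m + 1) * (sin ((m + 1) * b) - sin ((m + 1) * a)) / ((m : ℝ) + 1) ^ 2)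
      (∫ t in a..b, -log ‖1 - r * Complex.exp (t * Complex.I)‖) := by
  have hgeom : Summable fun m : ℕ => |r| ^ (m + 1) :=
    (summable_nat_add_iff 1).mpr (summable_geometric_of_lt_one (abs_nonneg r) hr)
  simp_rw [← integral_pow_succ_mul_cos_div]
  refine intervalIntegral.hasSum_integral_of_dominated_convergence (fun m _ => |r| ^ (m + 1))
    (fun m => (by fun_prop : Continuous _).aestronglyMeasurable)
    (fun m => ae_of_all _ fun t _ => ?_) (ae_of_all _ fun _ _ => hgeom) intervalIntegrable_const
    (ae_of_all _ fun t _ => hasSum_pow_succ_mul_cos_div hr t)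
  rw [norm_div, norm_mul, norm_pow, Real.norm_eq_abs, Real.norm_eq_abs,
    Real.norm_of_nonneg (by positivity : (0 : ℝ) ≤ m + 1)]
  calc |r| ^ (m + 1) * |cos ((m + 1) * t)| / (m + 1) ≤ |r| ^ (m + 1) * 1 / 1 := by
        gcongr
        · exact abs_cos_le_one _
        · linarith [(m.cast_nonneg : (0 : ℝ) ≤ m)]
    _ = |r| ^ (m + 1) := by ring

lemma norm_one_sub_mul_exp_sq (r t : ℝ) :
    ‖1 - r * Complex.exp (t * Complex.I)‖ ^ 2 = (1 - r) ^ 2 + 4 * r * sin (t / 2) ^ 2 := by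
  rw [Complex.sq_norm, Complex.normSq_apply]
  simp only [Complex.sub_re, Complex.one_re, Complex.mul_re, Complex.ofReal_re,
    Complex.exp_ofReal_mul_I_re, Complex.ofReal_im, Complex.exp_ofReal_mul_I_im, zero_mul, sub_zero,
    Complex.sub_im, Complex.one_im, Complex.mul_im, add_zero, zero_sub, mul_neg, neg_mul, neg_neg]
  have h := cos_sq (t / 2)
  rw [show 2 * (t / 2) = t by ring] at h
  linear_combination r ^ 2 * sin_sq_add_cos_sq t - 4 * r * sin_sq_add_cos_sq (t / 2) + 4 * r * h

lemma norm_one_sub_exp_mul_I (t : ℝ) :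
    ‖1 - Complex.exp (t * Complex.I)‖ = 2 * |sin (t / 2)| := by
  have h := norm_one_sub_mul_exp_sq 1 t
  rw [Complex.ofReal_one, one_mul] at h
  rw [← sq_eq_sq₀ (norm_nonneg _) (by positivity), h, mul_pow, sq_abs]
  ring

lemma abs_sin_half_le_norm_one_sub_mul_exp {r : ℝ} (hr : 0 ≤ r) (t : ℝ) :
    |sin (t / 2)| ≤ ‖1 - r * Complex.exp (t * Complex.I)‖ := by
  rw [← abs_norm, ← sq_le_sq, norm_one_sub_mul_exp_sq, sin_sq]
  have hc := sq_nonneg (cos (t / 2))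
  have hc₁ : 0 ≤ 1 - cos (t / 2) ^ 2 := by rw [← sin_sq]; positivity
  nlinarith [sq_nonneg (r - cos (t / 2) ^ 2), mul_nonneg hr hc₁, mul_nonneg hc hc₁]

lemma norm_one_sub_mul_exp_le_two {r : ℝ} (hr : |r| ≤ 1) (t : ℝ) :
    ‖1 - r * Complex.exp (t * Complex.I)‖ ≤ 2 := by
  calc ‖1 - r * Complex.exp (t * Complex.I)‖
      ≤ ‖(1 : ℂ)‖ + ‖(r : ℂ) * Complex.exp (t * Complex.I)‖ := norm_sub_le _ _
    _ ≤ 2 := by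
      rw [norm_one, norm_mul, Complex.norm_exp_ofReal_mul_I, Complex.norm_real, Real.norm_eq_abs]
      linarith

lemma abs_log_le_abs_log_add_abs_log {u v w : ℝ} (hu : 0 < u) (huv : u ≤ v) (hvw : v ≤ w) :
    |log v| ≤ |log u| + |log w| := by
  have h₁ := log_le_log hu huv
  have h₂ := log_le_log (hu.trans_le huv) hvw
  rw [abs_le]
  constructor <;> linarith [neg_abs_le (log u), le_abs_self (log w), abs_nonneg (log u),
    abs_nonneg (log w)]

lemma abs_log_norm_one_sub_mul_exp_le {r : ℝ} (hr₀ : 0 ≤ r) (hr₁ : r ≤ 1) {t : ℝ}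
    (ht : sin (t / 2) ≠ 0) :
    |log ‖1 - r * Complex.exp (t * Complex.I)‖| ≤ |log (sin (t / 2))| + |log 2| := by
  rw [← log_abs (sin (t / 2))]
  exact abs_log_le_abs_log_add_abs_log (abs_pos.2 ht)
    (abs_sin_half_le_norm_one_sub_mul_exp hr₀ t)
    (norm_one_sub_mul_exp_le_two (abs_le.2 ⟨by linarith, hr₁⟩) t)

lemma ae_sin_half_ne_zero : ∀ᵐ t : ℝ, sin (t / 2) ≠ 0 := by
  refine ae_iff.2 (measure_mono_null ?_
    ((Set.countable_range fun n : ℤ => 2 * (n * π)).measure_zero volume))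
  intro t ht
  obtain ⟨n, hn⟩ := sin_eq_zero_iff.mp (not_not.mp ht)
  exact ⟨n, by simp only; linarith⟩

lemma tendsto_integral_neg_log_norm_one_sub_mul_exp (a b : ℝ) :
    Tendsto (fun r : ℝ => ∫ t in a..b, -log ‖1 - r * Complex.exp (t * Complex.I)‖) (𝓝[<] 1)
      (𝓝 (∫ t in a..b, -log (2 * sin (t / 2)))) := by
  refine intervalIntegral.tendsto_integral_filter_of_dominated_convergence
    (fun t => |log (sin (t / 2))| + |log 2|)
    (Eventually.of_forall fun r => (by fun_prop : Measurable _).aestronglyMeasurable) ?_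
    (((AnalyticOnNhd.meromorphicOn fun _ _ => by fun_prop).intervalIntegrable_log).abs.add
      intervalIntegrable_const) ?_
  · filter_upwards [Ioo_mem_nhdsLT zero_lt_one] with r hr
    filter_upwards [ae_sin_half_ne_zero] with t ht _
    rw [norm_neg, Real.norm_eq_abs]
    exact abs_log_norm_one_sub_mul_exp_le hr.1.le hr.2.le ht
  · filter_upwards [ae_sin_half_ne_zero] with t ht _
    have hlimit : -log ‖1 - ((1 : ℝ) : ℂ) * Complex.exp (t * Complex.I)‖ =
        -log (2 * sin (t / 2)) := by
      rw [Complex.ofReal_one, one_mul, norm_one_sub_exp_mul_I, ← log_abs (2 * sin (t / 2)), abs_mul,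
        abs_two]
    have hcont : ContinuousAt (fun r : ℝ => -log ‖1 - r * Complex.exp (t * Complex.I)‖) 1 := by
      refine (continuousAt_log ?_).comp (by fun_prop) |>.neg
      rw [Complex.ofReal_one, one_mul, norm_one_sub_exp_mul_I]
      positivity
    exact hlimit ▸ hcont.tendsto.mono_left nhdsWithin_le_nhds

lemma tendsto_tsum_pow_succ_mul_nhdsLT_one {c : ℕ → ℝ} (hc : Summable fun m => ‖c m‖) :
    Tendsto (fun r : ℝ => ∑' m, r ^ (m + 1) * c m) (𝓝[<] 1) (𝓝 (∑' m, c m)) := by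
  refine tendsto_tsum_of_dominated_convergence hc (fun m => ?_) ?_
  · have h := (by fun_prop : Continuous fun r : ℝ => r ^ (m + 1) * c m).tendsto 1
    simpa using h.mono_left nhdsWithin_le_nhds
  · filter_upwards [Ioo_mem_nhdsLT zero_lt_one] with r hr m
    rw [norm_mul, norm_pow, Real.norm_of_nonneg hr.1.le]
    exact mul_le_of_le_one_left (norm_nonneg _) (pow_le_one₀ hr.1.le hr.2.le)

theorem integral_neg_log_two_mul_sin_half (a b : ℝ) :
    ∫ t in a..b, -log (2 * sin (t / 2)) = Cl2 b - Cl2 a := by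
  set c : ℕ → ℝ := fun m => (sin ((m + 1) * b) - sin ((m + 1) * a)) / ((m : ℝ) + 1) ^ 2
  have hc : HasSum c (Cl2 b - Cl2 a) := by
    simpa only [c, sub_div] using (hasSum_Cl2 b).sub (hasSum_Cl2 a)
  have hc_norm : Summable fun m => ‖c m‖ :=
    ((summable_norm_sin_mul_div_succ_sq b).add
      (summable_norm_sin_mul_div_succ_sq a)).of_nonneg_of_le (fun _ => norm_nonneg _)
        fun m => by simp only [c, sub_div]; exact norm_sub_le _ _
  have habel : (fun r : ℝ => ∫ t in a..b, -log ‖1 - r * Complex.exp (t * Complex.I)‖)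
      =ᶠ[𝓝[<] 1] fun r => ∑' m, r ^ (m + 1) * c m := by
    filter_upwards [Ioo_mem_nhdsLT zero_lt_one] with r hr
    have hr' : |r| < 1 := abs_lt.2 ⟨by linarith [hr.1], hr.2⟩
    simp only [c, ← mul_div_assoc]
    exact (hasSum_integral_neg_log_norm_one_sub_mul_exp hr' a b).tsum_eq.symm
  exact tendsto_nhds_unique ((tendsto_integral_neg_log_norm_one_sub_mul_exp a b).congr' habel)
    (hc.tsum_eq ▸ tendsto_tsum_pow_succ_mul_nhdsLT_one hc_norm)

lemma tan_add_div_tan_sub {φ θ : ℝ} (hφ : cos φ ≠ 0) (hθ : cos θ ≠ 0) :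
    (tan φ + tan θ) / (tan φ - tan θ) = sin (φ + θ) / sin (φ - θ) := by
  rw [tan_eq_sin_div_cos, tan_eq_sin_div_cos, div_add_div _ _ hφ hθ, div_sub_div _ _ hφ hθ,
    div_div_div_cancel_right₀ (mul_ne_zero hφ hθ), sin_add, sin_sub]

lemma log_tan_add_div_tan_sub {φ θ : ℝ} (hθ : 0 < θ) (hθφ : θ < φ) (hφ : φ < π / 2) :
    log ((tan φ + tan θ) / (tan φ - tan θ)) = log (2 * sin (φ + θ)) - log (2 * sin (φ - θ)) := by
  have hadd : sin (φ + θ) ≠ 0 := (sin_pos_of_pos_of_lt_pi (by linarith) (by linarith)).ne'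
  have hsub : sin (φ - θ) ≠ 0 := (sin_pos_of_pos_of_lt_pi (by linarith) (by linarith)).ne'
  rw [tan_add_div_tan_sub (cos_pos_of_mem_Ioo ⟨by linarith, hφ⟩).ne'
      (cos_pos_of_mem_Ioo ⟨by linarith, by linarith⟩).ne',
    log_div hadd hsub, log_mul two_ne_zero hadd, log_mul two_ne_zero hsub]
  ring

theorem stmt11 (x φ : ℝ) (h1 : 0 < x) (h2 : x < φ) (h3 : φ < π / 2) :
    ∫ θ in x..φ, Real.log ((Real.tan φ + Real.tan θ) / (Real.tan φ - Real.tan θ)) =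
      (1 / 2) * Cl2 (2 * x + 2 * φ) - (1 / 2) * Cl2 (2 * x - 2 * φ)
        - (1 / 2) * Cl2 (4 * φ) := by
  set G : ℝ → ℝ := fun t => -log (2 * sin (t / 2))
  have hsplit : Set.EqOn (fun θ => log ((tan φ + tan θ) / (tan φ - tan θ)))
      (fun θ => G (2 * φ - 2 * θ) - G (2 * θ + 2 * φ)) (Set.Ioo x φ) := by
    rintro θ ⟨hxθ, hθφ⟩
    simp only [G, show (2 * φ - 2 * θ) / 2 = φ - θ by ring,
      show (2 * θ + 2 * φ) / 2 = φ + θ by ring, log_tan_add_div_tan_sub (h1.trans hxθ) hθφ h3]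
    ring
  have hint₁ : IntervalIntegrable (fun θ => G (2 * φ - 2 * θ)) volume x φ :=
    (AnalyticOnNhd.meromorphicOn fun _ _ => by fun_prop).intervalIntegrable_log.neg
  have hint₂ : IntervalIntegrable (fun θ => G (2 * θ + 2 * φ)) volume x φ :=
    (AnalyticOnNhd.meromorphicOn fun _ _ => by fun_prop).intervalIntegrable_log.neg
  rw [intervalIntegral.integral_congr_Ioo_of_le h2.le hsplit,
    intervalIntegral.integral_sub hint₁ hint₂,
    intervalIntegral.integral_comp_sub_mul G two_ne_zero,
    intervalIntegral.integral_comp_mul_add G two_ne_zero,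
    integral_neg_log_two_mul_sin_half, integral_neg_log_two_mul_sin_half, sub_self, Cl2_zero,
    show 2 * φ - 2 * x = -(2 * x - 2 * φ) by ring, Cl2_neg, show 2 * φ + 2 * φ = 4 * φ by ring,
    smul_eq_mul, smul_eq_mul]
  ring
end
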